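/- arXiv:2601.19144 — 5 statements merged into one kernel-verified Lean document; each statement's English description precedes it below -/
import Mathlib

section
/- If T is a k-bounded perturbation of S, then every element is displaced by at most k positions: if s_i occupies position p in T, then |p - i| ≤ k. -/
/-!
Let `f i` be the position in `T` of the `i`-th entry of `S`; it is a permutation of the positions.
The `f i` entries sent before `f i` all come from indices `j ≠ i` with `j ≤ i + k`, since a
later index `j > i` sent before `i` forms an inversion, so `f i ≤ i + k`. Reversing the order of
both `S` and `T` preserves the hypothesis and turns this bound into `i ≤ f i + k`.
-/

namespace Fin

variable {n k : ℕ} {f : Fin n → Fin n}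

theorem val_apply_le_add_of_inversions_le (hf : Function.Surjective f)
    (hk : ∀ i j : Fin n, i < j → f j < f i → (j : ℕ) - i ≤ k) (i : Fin n) :
    (f i : ℕ) ≤ i + k := by
  choose g hg using hf
  have hmaps : Set.MapsTo (fun m => (g m : ℕ)) (Finset.Iio (f i))
      ((Finset.range (i + k + 1)).erase i) := by
    intro m hm
    have hlt : f (g m) < f i := (hg m).symm ▸ Finset.mem_Iio.mp hm
    have hne : g m ≠ i := by rintro rfl; exact lt_irrefl _ hlt
    have hle : (g m : ℕ) ≤ i + k := by
      rcases lt_or_ge i (g m) with hgt | hge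
      · have := hk i (g m) hgt hlt; omega
      · exact le_add_right hge
    rw [Finset.mem_coe, Finset.mem_erase, Finset.mem_range, Ne, Fin.val_inj]
    exact ⟨hne, Nat.lt_succ_of_le hle⟩
  have hinj : Set.InjOn (fun m => (g m : ℕ)) (Finset.Iio (f i)) := fun a _ b _ hab =>
    (Function.LeftInverse.injective hg) (Fin.ext hab)
  have := Finset.card_le_card_of_injOn _ hmaps hinj
  rwa [Fin.card_Iio, Finset.card_erase_of_mem (by simp), Finset.card_range,
    Nat.add_sub_cancel] at this

theorem le_val_apply_add_of_inversions_le (hf : Function.Surjective f)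
    (hk : ∀ i j : Fin n, i < j → f j < f i → (j : ℕ) - i ≤ k) (i : Fin n) :
    (i : ℕ) ≤ f i + k := by
  have hrev : ∀ i j : Fin n, i < j → rev (f (rev j)) < rev (f (rev i)) → (j : ℕ) - i ≤ k := by
    intro i j hij hlt
    have := hk (rev j) (rev i) (rev_lt_rev.mpr hij) (rev_lt_rev.mp hlt)
    simp only [val_rev] at this
    omega
  have := val_apply_le_add_of_inversions_le (rev_surjective.comp (hf.comp rev_surjective))
    hrev (rev i)
  simp only [Function.comp_apply, rev_rev, val_rev] at this
  omega

theorem abs_sub_le_of_inversions_le (hf : Function.Surjective f)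
    (hk : ∀ i j : Fin n, i < j → f j < f i → (j : ℕ) - i ≤ k) (i : Fin n) :
    |(f i : ℤ) - (i : ℕ)| ≤ k := by
  have := val_apply_le_add_of_inversions_le hf hk i
  have := le_val_apply_add_of_inversions_le hf hk i
  rw [abs_le]
  omega

end Fin

def IsKBoundedPerturbation {α : Type*} [DecidableEq α] (k : ℕ) (S T : List α) : Prop :=
  T.Perm S ∧ ∀ i j : Fin S.length, (i : ℕ) < (j : ℕ) →
    T.idxOf (S.get j) < T.idxOf (S.get i) → (j : ℕ) - (i : ℕ) ≤ k

/-- in a k-bounded perturbation, every element is displaced by at most k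
positions: if the i-th entry of S occupies position p in T, then |p - i| ≤ k. -/
theorem stmt3 {α : Type*} [DecidableEq α] (k : ℕ) (S T : List α) (hS : S.Nodup)
    (h : IsKBoundedPerturbation k S T) :
    ∀ i : Fin S.length, |(T.idxOf (S.get i) : ℤ) - (i : ℕ)| ≤ (k : ℤ) := by
  obtain ⟨hperm, hinv⟩ := h
  have hmem (i : Fin S.length) : S.get i ∈ T := hperm.mem_iff.mpr (S.get_mem i)
  let pos : Fin S.length → Fin S.length := fun i =>
    ⟨T.idxOf (S.get i), hperm.length_eq ▸ List.idxOf_lt_length_of_mem (hmem i)⟩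
  have hpos : Function.Injective pos := fun a b hab =>
    hS.injective_get ((List.idxOf_inj (hmem a)).mp (Fin.val_eq_of_eq hab))
  exact Fin.abs_sub_le_of_inversions_le (Finite.injective_iff_surjective.mp hpos) hinv
end

section
/- Let A be an arrangement of loads {1,...,n} on an r × c grid with n = rc, and let k ≥ 0. Suppose some load x is neither in the bottom row nor adjacent to any load y with y ≤ x - (k+1). Then there exists a k-bounded perturbation D' of (1, ..., n) in which x is not preceded by any of its grid-neighbors; i.e., x appears in D' before every load adjacent to x in A. -/
/-- 4-neighbor adjacency of grid cells (row, column). -/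
def AdjCell (a b : ℕ × ℕ) : Prop :=
  (a.1 = b.1 ∧ (a.2 = b.2 + 1 ∨ b.2 = a.2 + 1)) ∨
  (a.2 = b.2 ∧ (a.1 = b.1 + 1 ∨ b.1 = a.1 + 1))

/-- The cell lies in the r x c grid, rows 1..r (row 1 is the bottom row), columns 1..c. -/
def InGrid (r c : ℕ) (a : ℕ × ℕ) : Prop :=
  1 ≤ a.1 ∧ a.1 ≤ r ∧ 1 ≤ a.2 ∧ a.2 ≤ c

/-!
Move `x` earlier by `t = min k (x - 1)` places. The only inverted pairs are `(v, x)` with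
`x - t ≤ v < x`, so the perturbation is `k`-bounded. A neighbour `y` of `x` satisfies
`x - k ≤ y`, so either `y > x` or `y` lies in the block that `x` has jumped over; in both
cases `y` now comes after `x`.
-/

theorem List.idxOf_range' {s len v : ℕ} (h₁ : s ≤ v) (h₂ : v < s + len) :
    (List.range' s len).idxOf v = v - s := by
  have h := (List.nodup_range' (s := s) (n := len)).idxOf_getElem (v - s)
    (by simp only [List.length_range']; omega)
  simpa only [List.getElem_range'_1, Nat.add_sub_cancel' h₁] using h

theorem isKBoundedPerturbation_range'_of_forall {k n : ℕ} {D : List ℕ}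
    (hperm : D.Perm (List.range' 1 n))
    (hbound : ∀ u v, 1 ≤ u → v ≤ n → u < v → D.idxOf v < D.idxOf u → v - u ≤ k) :
    IsKBoundedPerturbation k (List.range' 1 n) D := by
  refine ⟨hperm, fun i j hij hinv => ?_⟩
  have hj : (j : ℕ) < n := by simpa only [List.length_range'] using j.isLt
  simp only [List.get_eq_getElem, List.getElem_range'_1] at hinv
  have := hbound (1 + i) (1 + j) (by omega) (by omega) (by omega) hinv
  omega

def moveEarlier (n x t : ℕ) : List ℕ :=
  List.range' 1 (x - 1 - t) ++ x :: (List.range' (x - t) t ++ List.range' (x + 1) (n - x))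

section moveEarlier

variable {n x t : ℕ}

theorem moveEarlier_perm (hx : x ∈ Set.Icc 1 n) (ht : t < x) :
    (moveEarlier n x t).Perm (List.range' 1 n) := by
  obtain ⟨hx₁, hxn⟩ := hx
  have hsplit : List.range' 1 n = List.range' 1 (x - 1 - t) ++
      (List.range' (x - t) t ++ x :: List.range' (x + 1) (n - x)) := by
    have e₁ := List.range'_append_1 (s := x - t) (m := t) (n := n - x + 1)
    have e₂ := List.range'_append_1 (s := 1) (m := x - 1 - t) (n := t + (n - x + 1))
    rw [show x - t + t = x by omega] at e₁
    rw [show 1 + (x - 1 - t) = x - t by omega, show x - 1 - t + (t + (n - x + 1)) = n by omega]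
      at e₂
    rw [← List.range'_succ, e₁, e₂]
  rw [hsplit]
  exact List.perm_middle.symm.append_left _

theorem idxOf_moveEarlier_self : (moveEarlier n x t).idxOf x = x - 1 - t := by
  rw [moveEarlier, List.idxOf_append_of_notMem (by simp only [List.mem_range'_1]; omega),
    List.idxOf_cons_self, List.length_range', Nat.add_zero]

theorem idxOf_moveEarlier_of_ne {v : ℕ} (hv : v ∈ Set.Icc 1 n) (hvx : v ≠ x) (ht : t < x) :
    (moveEarlier n x t).idxOf v = if x - t ≤ v ∧ v < x then v else v - 1 := by
  obtain ⟨hv₁, hvn⟩ := hv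
  unfold moveEarlier
  by_cases hlow : v < x - t
  · rw [List.idxOf_append_of_mem (List.mem_range'_1.2 ⟨hv₁, by omega⟩),
      List.idxOf_range' hv₁ (by omega), if_neg (by omega)]
  rw [List.idxOf_append_of_notMem (by simp only [List.mem_range'_1]; omega),
    List.length_range', List.idxOf_cons_ne _ (Ne.symm hvx)]
  by_cases hmid : v < x
  · rw [List.idxOf_append_of_mem (List.mem_range'_1.2 ⟨by omega, by omega⟩),
      List.idxOf_range' (by omega) (by omega), if_pos ⟨by omega, hmid⟩]
    omega
  · rw [List.idxOf_append_of_notMem (by simp only [List.mem_range'_1]; omega),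
      List.length_range', List.idxOf_range' (by omega) (by omega), if_neg (by omega)]
    omega

theorem isKBoundedPerturbation_moveEarlier {k : ℕ} (hx : x ∈ Set.Icc 1 n) (ht : t < x)
    (htk : t ≤ k) : IsKBoundedPerturbation k (List.range' 1 n) (moveEarlier n x t) := by
  refine isKBoundedPerturbation_range'_of_forall (moveEarlier_perm hx ht)
    fun u v hu hv huv hinv => ?_
  have hu' : u ∈ Set.Icc 1 n := ⟨hu, by omega⟩
  have hv' : v ∈ Set.Icc 1 n := ⟨by omega, hv⟩
  rcases eq_or_ne v x with rfl | hvx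
  · rw [idxOf_moveEarlier_self, idxOf_moveEarlier_of_ne hu' huv.ne ht] at hinv
    split_ifs at hinv <;> omega
  rcases eq_or_ne u x with rfl | hux
  · rw [idxOf_moveEarlier_self, idxOf_moveEarlier_of_ne hv' hvx ht] at hinv
    split_ifs at hinv <;> omega
  · rw [idxOf_moveEarlier_of_ne hv' hvx ht, idxOf_moveEarlier_of_ne hu' hux ht] at hinv
    split_ifs at hinv <;> omega

theorem idxOf_moveEarlier_self_lt {v : ℕ} (hv : v ∈ Set.Icc 1 n) (hvx : v ≠ x) (ht : t < x)
    (hxv : x - t ≤ v) : (moveEarlier n x t).idxOf x < (moveEarlier n x t).idxOf v := by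
  rw [idxOf_moveEarlier_self, idxOf_moveEarlier_of_ne hv hvx ht]
  split_ifs <;> omega

end moveEarlier

theorem stmt10_general (n k : ℕ) (pos : ℕ → ℕ × ℕ)
    (x : ℕ) (hx : x ∈ Set.Icc 1 n)
    (hnoadj : ∀ y ∈ Set.Icc 1 n, AdjCell (pos x) (pos y) → ¬ (y + (k + 1) ≤ x)) :
    ∃ D' : List ℕ, IsKBoundedPerturbation k (List.range' 1 n) D' ∧
      ∀ y ∈ Set.Icc 1 n, y ≠ x → AdjCell (pos x) (pos y) → D'.idxOf x < D'.idxOf y := by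
  have ht : min k (x - 1) < x := by have := hx.1; omega
  refine ⟨moveEarlier n x (min k (x - 1)),
    isKBoundedPerturbation_moveEarlier hx ht (min_le_left _ _), fun y hy hyx hadj => ?_⟩
  have hnear := hnoadj y hy hadj
  exact idxOf_moveEarlier_self_lt hy hyx ht (by have := hy.1; omega)

/-- 'only if' direction of the robust adjacency conditions: if load x is
neither in the bottom row nor adjacent to any load y ≤ x - (k+1), then some k-bounded
perturbation of (1,...,n) places x before all of its grid-neighbors. -/
theorem stmt10 (r c n k : ℕ) (hn : n = r * c) (pos : ℕ → ℕ × ℕ)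
    (hinj : Set.InjOn pos (Set.Icc 1 n))
    (hgrid : ∀ x ∈ Set.Icc 1 n, InGrid r c (pos x))
    (x : ℕ) (hx : x ∈ Set.Icc 1 n) (hxrow : (pos x).1 ≠ 1)
    (hnoadj : ∀ y ∈ Set.Icc 1 n, AdjCell (pos x) (pos y) → ¬ (y + (k + 1) ≤ x)) :
    ∃ D' : List ℕ, IsKBoundedPerturbation k (List.range' 1 n) D' ∧
      ∀ y ∈ Set.Icc 1 n, y ≠ x → AdjCell (pos x) (pos y) → D'.idxOf x < D'.idxOf y :=
  stmt10_general n k pos x hx hnoadj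
end

section
/- Fix k ≥ 0, r ≥ 2, and n = rc ≥ 2k+3. Consider arrangements of loads {1,...,n} on the r × c grid that are simultaneously k-robust for the departure order D = (1,...,n) and satisfy the adjacency conditions for a second departure order beginning with the loads n, k+2, k+3, ..., 2k+2 (i.e., each of these loads, in this order, must be in the bottom row or adjacent to a load appearing earlier in this second order). Then in any such arrangement, all of the loads 1, 2, ..., k+1 and n, k+2, k+3, ..., 2k+2 lie in the bottom row, hence c ≥ 2k+3. -/
/-- Prefix of the second departure order in the lower-bound construction:
n, k+2, k+3, ..., 2k+2. -/
def secondOrder (n k : ℕ) : List ℕ := n :: List.range' (k + 2) (k + 1)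

/-- A cell above the bottom row that is adjacent to a bottom-row cell has that cell
directly below it: hence it is adjacent to at most one bottom-row cell. -/
lemma adj_bottom {a b : ℕ × ℕ} (h : AdjCell a b) (ha1 : 1 ≤ a.1) (ha : a.1 ≠ 1)
    (hb : b.1 = 1) : b = (1, a.2) := by
  rcases h with ⟨h1, _⟩ | ⟨h1, h2⟩
  · omega
  · have : b.2 = a.2 := h1.symm
    have : b.1 = 1 := hb
    exact Prod.ext hb h1.symm

lemma secondOrder_length (n k : ℕ) : (secondOrder n k).length = k + 2 := by
  simp [secondOrder]

lemma secondOrder_get_zero (n k : ℕ) (h : 0 < (secondOrder n k).length) :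
    (secondOrder n k).get ⟨0, h⟩ = n := rfl

lemma secondOrder_get_succ (n k t : ℕ) (h : t + 1 < (secondOrder n k).length) :
    (secondOrder n k).get ⟨t + 1, h⟩ = k + 2 + t := by
  have ht : t < k + 1 := by
    have := secondOrder_length n k; omega
  simp [secondOrder, List.getElem_range']

lemma secondOrder_get_range (n k : ℕ) (hsize : 2 * k + 3 ≤ n)
    (j : Fin (secondOrder n k).length) :
    k + 2 ≤ (secondOrder n k).get j ∧ (secondOrder n k).get j ≤ n := by
  obtain ⟨jv, hj⟩ := j
  match jv with
  | 0 => rw [secondOrder_get_zero]; omega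
  | t + 1 =>
      rw [secondOrder_get_succ]
      have := secondOrder_length n k
      omega

/-- lower bound, Theorem 6: if an arrangement of 1..n on the r × c grid
(r ≥ 2, n = rc ≥ 2k+3) is k-robust for (1,...,n) and satisfies the adjacency conditions
for a second departure order beginning with n, k+2, ..., 2k+2, then all of the loads
1, ..., k+1 and n, k+2, ..., 2k+2 lie in the bottom row, hence c ≥ 2k+3. -/
theorem stmt12 (r c n k : ℕ) (hn : n = r * c) (hr : 2 ≤ r) (hsize : 2 * k + 3 ≤ n)
    (pos : ℕ → ℕ × ℕ)
    (hinj : Set.InjOn pos (Set.Icc 1 n))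
    (hgrid : ∀ x ∈ Set.Icc 1 n, InGrid r c (pos x))
    (hrob : ∀ x ∈ Set.Icc 1 n, (pos x).1 = 1 ∨
      ∃ y ∈ Set.Icc 1 n, y + (k + 1) ≤ x ∧ AdjCell (pos x) (pos y))
    (hsecond : ∀ i : Fin (secondOrder n k).length,
      (pos ((secondOrder n k).get i)).1 = 1 ∨
      ∃ j : Fin (secondOrder n k).length, (j : ℕ) < (i : ℕ) ∧
        AdjCell (pos ((secondOrder n k).get i)) (pos ((secondOrder n k).get j))) :
    (∀ m, (m ∈ Set.Icc 1 (k + 1) ∨ m ∈ Set.Icc (k + 2) (2 * k + 2) ∨ m = n) →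
      (pos m).1 = 1) ∧ 2 * k + 3 ≤ c := by
  have hlen := secondOrder_length n k
  -- loads 1..k+1 are in the bottom row
  have hA : ∀ x, 1 ≤ x → x ≤ k + 1 → (pos x).1 = 1 := by
    intro x h1 h2
    rcases hrob x ⟨h1, by omega⟩ with h | ⟨y, hy, hle, _⟩
    · exact h
    · have : 1 ≤ y := hy.1
      omega
  -- all elements of the second order are in the bottom row
  have hkey : ∀ i : ℕ, ∀ h : i < (secondOrder n k).length,
      (pos ((secondOrder n k).get ⟨i, h⟩)).1 = 1 := by
    intro i
    induction i using Nat.strong_induction_on with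
    | _ i IH =>
      intro h
      rcases hsecond ⟨i, h⟩ with hb | ⟨j, hj, hadj⟩
      · exact hb
      · -- j < i, so i = t+1 for some t
        match i, h with
        | 0, h => simp at hj
        | t + 1, h =>
          rw [secondOrder_get_succ] at hadj ⊢
          set x := k + 2 + t with hx
          by_contra hne
          have hxmem : x ∈ Set.Icc 1 n := ⟨by omega, by omega⟩
          have hxgrid := hgrid x hxmem
          have hx1 : 1 ≤ (pos x).1 := hxgrid.1
          -- the second-order neighbor is in the bottom row (IH)
          have hjbot : (pos ((secondOrder n k).get j)).1 = 1 := IH j.1 hj j.2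
          -- robustness neighbor
          rcases hrob x hxmem with hb | ⟨y, hy, hyle, hadj2⟩
          · exact hne hb
          · have hy1 : 1 ≤ y := hy.1
            have hyk : y ≤ k + 1 := by omega
            have hybot : (pos y).1 = 1 := hA y hy1 hyk
            have e1 : pos ((secondOrder n k).get j) = (1, (pos x).2) :=
              adj_bottom hadj hx1 hne hjbot
            have e2 : pos y = (1, (pos x).2) := adj_bottom hadj2 hx1 hne hybot
            have hjrange := secondOrder_get_range n k hsize j
            have hjmem : (secondOrder n k).get j ∈ Set.Icc 1 n :=
              ⟨by omega, hjrange.2⟩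
            have := hinj hy hjmem (e2.trans e1.symm)
            omega
  have hB : ∀ m, (m = n ∨ (k + 2 ≤ m ∧ m ≤ 2 * k + 2)) → (pos m).1 = 1 := by
    intro m hm
    rcases hm with rfl | ⟨h1, h2⟩
    · have := hkey 0 (by omega)
      rwa [secondOrder_get_zero] at this
    · have ht : (m - (k + 2)) + 1 < (secondOrder n k).length := by omega
      have hv := hkey ((m - (k + 2)) + 1) ht
      rw [secondOrder_get_succ] at hv
      have heq : k + 2 + (m - (k + 2)) = m := by omega
      rwa [heq] at hv
  have hall : ∀ m, (m ∈ Set.Icc 1 (k + 1) ∨ m ∈ Set.Icc (k + 2) (2 * k + 2) ∨ m = n) →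
      (pos m).1 = 1 := by
    rintro m (⟨h1, h2⟩ | ⟨h1, h2⟩ | rfl)
    · exact hA m h1 h2
    · exact hB m (Or.inr ⟨h1, h2⟩)
    · exact hB m (Or.inl rfl)
  refine ⟨hall, ?_⟩
  -- cardinality argument
  have hcard : 2 * k + 3 ≤ c := by
    have hsub : ∀ m ∈ insert n (Finset.Icc 1 (2 * k + 2)), m ∈ Set.Icc 1 n := by
      intro m hm
      simp only [Finset.mem_insert, Finset.mem_Icc] at hm
      rcases hm with rfl | ⟨h1, h2⟩
      · exact ⟨by omega, le_rfl⟩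
      · exact ⟨h1, by omega⟩
    have hbot : ∀ m ∈ insert n (Finset.Icc 1 (2 * k + 2)), (pos m).1 = 1 := by
      intro m hm
      simp only [Finset.mem_insert, Finset.mem_Icc] at hm
      rcases hm with rfl | ⟨h1, h2⟩
      · exact hB _ (Or.inl rfl)
      · rcases le_or_gt m (k + 1) with h | h
        · exact hA m h1 h
        · exact hB m (Or.inr ⟨by omega, h2⟩)
    have hmaps : ∀ m ∈ insert n (Finset.Icc 1 (2 * k + 2)),
        (pos m).2 ∈ Finset.Icc 1 c := by
      intro m hm
      have := hgrid m (hsub m hm)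
      exact Finset.mem_Icc.mpr ⟨this.2.2.1, this.2.2.2⟩
    have hinj2 : Set.InjOn (fun m => (pos m).2)
        ↑(insert n (Finset.Icc 1 (2 * k + 2))) := by
      intro a ha b hb hab
      simp only at hab
      have ha' := hsub a ha
      have hb' := hsub b hb
      have : pos a = pos b := Prod.ext ((hbot a ha).trans (hbot b hb).symm) hab
      exact hinj ha' hb' this
    have hle := Finset.card_le_card_of_injOn _ hmaps hinj2
    have hc1 : (insert n (Finset.Icc 1 (2 * k + 2))).card = 2 * k + 3 := by
      rw [Finset.card_insert_of_notMem (by simp; omega)]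
      simp
    have hc2 : (Finset.Icc 1 c).card = c := by simp
    omega
  exact hcard
end

section
/- Let k ≥ 0 and suppose the loads {1, ..., n} are arranged on a grid so that each residue class A_j = {m : m ≡ j (mod k+1)} occupies a dedicated set of columns, with the property that within each class every load is either in the bottom row or adjacent to another load of the same class with smaller value. Then the arrangement is k-robust: every load x not in the bottom row is adjacent to some load y with y ≤ x - (k+1). -/
/-- correctness of the 3k+3 upper-bound construction: if each residue
class modulo k+1 occupies a dedicated set of columns and, within each class, every load
is in the bottom row or adjacent to a smaller load of the same class, then the
arrangement is k-robust: every load x not in the bottom row is adjacent to some load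
y ≤ x - (k+1). -/
theorem stmt13 (r c n k : ℕ) (pos : ℕ → ℕ × ℕ)
    (hinj : Set.InjOn pos (Set.Icc 1 n))
    (hgrid : ∀ x ∈ Set.Icc 1 n, InGrid r c (pos x))
    (hcols : ∀ x ∈ Set.Icc 1 n, ∀ y ∈ Set.Icc 1 n,
      (pos x).2 = (pos y).2 → x % (k + 1) = y % (k + 1))
    (hchain : ∀ x ∈ Set.Icc 1 n, (pos x).1 = 1 ∨
      ∃ y ∈ Set.Icc 1 n, y < x ∧ y % (k + 1) = x % (k + 1) ∧ AdjCell (pos x) (pos y)) :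
    ∀ x ∈ Set.Icc 1 n, (pos x).1 = 1 ∨
      ∃ y ∈ Set.Icc 1 n, y + (k + 1) ≤ x ∧ AdjCell (pos x) (pos y) := by
  intro x hx
  rcases hchain x hx with h1 | ⟨y, hy, hlt, hmod, hadj⟩
  · exact Or.inl h1
  · refine Or.inr ⟨y, hy, ?_, hadj⟩
    have hd : (k + 1) ∣ x - y := (Nat.modEq_iff_dvd' hlt.le).mp hmod
    have := Nat.le_of_dvd (by omega) hd
    omega
end

section
/- For n ≥ 1 and 1 ≤ m ≤ min(k+1, n), there exists a k-bounded perturbation of (1, ..., n) whose first element is m; hence the set of possible first elements of k-bounded perturbations of (1,...,n) is exactly {1, ..., min(k+1, n)}. -/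
/-!
The first element of a perturbation of `S` is some `S[j]`; unless `j = 0` the pair of positions
`(0, j)` is then inverted, so `j ≤ k`. Conversely, moving `S[j]` to the front inverts exactly the
pairs `(i, j)` with `i < j`, all of width at most `j`.
-/

namespace IsKBoundedPerturbation

variable {α : Type*} [DecidableEq α] {k : ℕ} {S T : List α}

theorem mono {l : ℕ} (hkl : k ≤ l) (h : IsKBoundedPerturbation k S T) :
    IsKBoundedPerturbation l S T :=
  ⟨h.1, fun i j hij hinv => (h.2 i j hij hinv).trans hkl⟩

theorem idxOf_le_of_head?_eq (h : IsKBoundedPerturbation k S T) {a : α}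
    (ha : T.head? = some a) : S.idxOf a ≤ k := by
  obtain ⟨t, rfl⟩ : ∃ t, T = a :: t := by
    cases T with
    | nil => simp at ha
    | cons b t => exact ⟨t, by simpa using ha⟩
  have haS : a ∈ S := h.1.subset List.mem_cons_self
  cases S with
  | nil => simp at haS
  | cons b s =>
    by_cases hba : b = a
    · simp [List.idxOf_cons_eq _ hba]
    have hlt : (b :: s).idxOf a < (b :: s).length := List.idxOf_lt_length_iff.2 haS
    have hinv := h.2 ⟨0, by simp⟩ ⟨_, hlt⟩ (by simp [List.idxOf_cons_ne _ hba])
    rw [List.get_eq_getElem, List.getElem_idxOf, List.idxOf_cons_self] at hinv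
    simpa [List.idxOf_cons_ne _ (Ne.symm hba)] using hinv

end IsKBoundedPerturbation

namespace List

variable {α : Type*} [DecidableEq α] {S : List α}

theorem Nodup.idxOf_eraseIdx_getElem (hS : S.Nodup) {i j : ℕ} (hi : i < S.length)
    (hij : i ≠ j) :
    (S.eraseIdx j).idxOf S[i] = if i < j then i else i - 1 := by
  have hlen : (S.eraseIdx j).length = if j < S.length then S.length - 1 else S.length :=
    length_eraseIdx
  split_ifs with hlt
  · have hi' : i < (S.eraseIdx j).length := by split_ifs at hlen <;> omega
    have hget : (S.eraseIdx j)[i] = S[i] := by simp [getElem_eraseIdx, hlt]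
    rw [← hget, (hS.eraseIdx j).idxOf_getElem]
  · have hi' : i - 1 < (S.eraseIdx j).length := by split_ifs at hlen <;> omega
    have hget : (S.eraseIdx j)[i - 1] = S[i] := by
      rw [getElem_eraseIdx, dif_neg (by omega)]
      congr 1
      omega
    rw [← hget, (hS.eraseIdx j).idxOf_getElem]

theorem Nodup.isKBoundedPerturbation_getElem_cons_eraseIdx (hS : S.Nodup) {j : ℕ}
    (hj : j < S.length) :
    IsKBoundedPerturbation j S (S[j] :: S.eraseIdx j) := by
  have hidx : ∀ (i : ℕ) (hi : i < S.length),
      (S[j] :: S.eraseIdx j).idxOf S[i] = if i = j then 0 else if i < j then i + 1 else i := by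
    intro i hi
    by_cases hij : i = j
    · simp [hij]
    · rw [if_neg hij, idxOf_cons_ne _ fun h => hij (hS.getElem_inj_iff.1 h).symm,
        hS.idxOf_eraseIdx_getElem hi hij]
      split_ifs <;> omega
  refine ⟨getElem_cons_eraseIdx_perm hj, fun i i' hii' hinv => ?_⟩
  simp only [get_eq_getElem, hidx] at hinv
  split_ifs at hinv <;> omega

theorem idxOf_range'_one {n m : ℕ} (h1 : 1 ≤ m) (h2 : m ≤ n) :
    (range' 1 n).idxOf m = m - 1 := by
  have hm : m - 1 < (range' 1 n).length := by rw [length_range']; omega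
  have hget : (range' 1 n)[m - 1] = m := by rw [getElem_range']; omega
  calc (range' 1 n).idxOf m = (range' 1 n).idxOf (range' 1 n)[m - 1] := by rw [hget]
    _ = m - 1 := Nodup.idxOf_getElem nodup_range' _ hm

end List

theorem stmt16_general (n k : ℕ) :
    (∀ m, 1 ≤ m → m ≤ min (k + 1) n →
      ∃ T : List ℕ, IsKBoundedPerturbation k (List.range' 1 n) T ∧ T.head? = some m) ∧
    (∀ (T : List ℕ) (m : ℕ), IsKBoundedPerturbation k (List.range' 1 n) T →
      T.head? = some m → 1 ≤ m ∧ m ≤ min (k + 1) n) := by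
  constructor
  · intro m hm1 hm
    have hmn : m - 1 < (List.range' 1 n).length := by rw [List.length_range']; omega
    have hT := List.Nodup.isKBoundedPerturbation_getElem_cons_eraseIdx List.nodup_range' hmn
    refine ⟨_, hT.mono (by omega), ?_⟩
    rw [List.head?_cons, List.getElem_range']
    congr 1
    omega
  · intro T m hT hm
    obtain ⟨hm1, hmn⟩ := List.mem_range'_1.1 (hT.1.subset (List.mem_of_mem_head? hm))
    have hidx := hT.idxOf_le_of_head?_eq hm
    rw [List.idxOf_range'_one hm1 (by omega)] at hidx
    omega

/-- the possible first elements of k-bounded perturbations of (1,...,n)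
are exactly 1, ..., min(k+1, n). -/
theorem stmt16 (n k : ℕ) (hn : 1 ≤ n) :
    (∀ m, 1 ≤ m → m ≤ min (k + 1) n →
      ∃ T : List ℕ, IsKBoundedPerturbation k (List.range' 1 n) T ∧ T.head? = some m) ∧
    (∀ (T : List ℕ) (m : ℕ), IsKBoundedPerturbation k (List.range' 1 n) T →
      T.head? = some m → 1 ≤ m ∧ m ≤ min (k + 1) n) :=
  stmt16_general n k
end
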